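/- Let n ≥ 1, a ∈ ℝⁿ, d ∈ ℝ, and let S = {(x,y) ∈ [0,1]ⁿ × [0,1]ⁿ : ∑_{i=1}^n a_i x_i y_i ≥ d} be nonempty. Then at least one of the following holds: (a) there exists a partition (I, J₀, J₁) of [n] with I ≠ ∅ such that {a_i : i ∈ I} forms a minimal cover of d − ∑_{i∈J₁} a_i; or (b) the convex hull of S is a polytope, i.e., there exists a finite set F ⊆ ℝⁿ × ℝⁿ with conv(S) = conv(F). -/

import Mathlib

/-!
Suppose no single coefficient `a i` is a minimal cover of `d - ∑ j ∈ J, a j` with `i ∉ J`, and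
let `(x, y)` be an extreme point of `conv S` with `0 < x i < 1`. Then no line through `(x, y)`
stays in `S` near `(x, y)`. Testing this against directions along which the bilinear form has
vanishing first-order and nonnegative second-order term shows that the constraint is tight, that
`a i * y i ≠ 0`, that all other coordinates of `x` and `y` are `0` or `1`, and that `0 < a i` when
`y i < 1`. Hence `a i * x i * y i = d - ∑ j ∈ J, a j` for some `J ∌ i`: if `y i = 1` this pins
`x i` to one of finitely many values, and otherwise `{a i}` would be a minimal cover. By symmetry
the same holds for `y`, so `conv S` has finitely many extreme points, and being compact it is
their convex hull (Krein–Milman).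
-/

open Set Function Filter Topology

theorem isCompact_convexHull_of_isCompact {E : Type*} [NormedAddCommGroup E] [NormedSpace ℝ E]
    [FiniteDimensional ℝ E] {s : Set E} (hs : IsCompact s) : IsCompact (convexHull ℝ s) := by
  rcases s.eq_empty_or_nonempty with rfl | ⟨z₀, hz₀⟩
  · simp
  set D := Module.finrank ℝ E + 1
  suffices convexHull ℝ s = (fun p : (Fin D → ℝ) × (Fin D → E) => ∑ i, p.1 i • p.2 i) ''
      (stdSimplex ℝ (Fin D) ×ˢ univ.pi fun _ => s) by
    rw [this]
    exact ((isCompact_stdSimplex ℝ _).prod (isCompact_univ_pi fun _ => hs)).image (by fun_prop)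
  refine Subset.antisymm (fun v hv => ?_) ?_
  · obtain ⟨ι, _, z, w, hzs, hz, hw0, hw1, rfl⟩ := eq_pos_convex_span_of_mem_convexHull hv
    -- Carathéodory: at most `D` points are needed; pad the combination with zero weights.
    obtain ⟨f⟩ : Nonempty (ι ↪ Fin D) := Function.Embedding.nonempty_of_card_le <| by
      simpa [D] using hz.card_le_finrank_succ.trans (by gcongr; exact Submodule.finrank_le _)
    have hout : ∀ j ∉ range f, extend f w 0 j = 0 := fun j hj => extend_apply' _ _ _ hj
    refine ⟨(extend f w 0, extend f z fun _ => z₀), ⟨⟨fun j => ?_, ?_⟩, fun j _ => ?_⟩, ?_⟩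
    · by_cases hj : j ∈ range f
      · obtain ⟨i, rfl⟩ := hj
        simpa [f.injective.extend_apply] using (hw0 i).le
      · simp [hout j hj]
    · rw [← hw1]
      exact (Fintype.sum_of_injective f f.injective _ _ hout
        fun i => (f.injective.extend_apply _ _ _).symm).symm
    · by_cases hj : j ∈ range f
      · obtain ⟨i, rfl⟩ := hj
        simpa [f.injective.extend_apply] using hzs (mem_range_self i)
      · simpa [extend_apply' _ _ _ hj] using hz₀
    · refine (Fintype.sum_of_injective f f.injective _ _ (fun j hj => ?_) fun i => ?_).symm
      · simp [hout j hj]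
      · simp [f.injective.extend_apply]
  · rintro _ ⟨⟨w, z⟩, ⟨⟨hw0, hw1⟩, hz⟩, rfl⟩
    exact (convex_convexHull ℝ s).sum_mem (fun i _ => hw0 i) hw1
      fun i _ => subset_convexHull ℝ s (hz i trivial)

theorem convexHull_eq_of_extremePoints_subset {E : Type*} [NormedAddCommGroup E]
    [NormedSpace ℝ E] [FiniteDimensional ℝ E] {A F : Set E} (hA : IsCompact A) (hF : F.Finite)
    (hFA : F ⊆ A) (hext : (convexHull ℝ A).extremePoints ℝ ⊆ F) :
    convexHull ℝ A = convexHull ℝ F := by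
  refine Subset.antisymm ?_ (convexHull_mono hFA)
  calc convexHull ℝ A
      = closure (convexHull ℝ ((convexHull ℝ A).extremePoints ℝ)) :=
        (closure_convexHull_extremePoints (isCompact_convexHull_of_isCompact hA)
          (convex_convexHull ℝ A)).symm
    _ ⊆ closure (convexHull ℝ F) := closure_mono (convexHull_mono hext)
    _ = convexHull ℝ F := (hF.isClosed_convexHull ℝ).closure_eq

theorem notMem_extremePoints_convexHull_of_eventually {E : Type*} [AddCommGroup E]
    [Module ℝ E] {A : Set E} {p w : E} (hw : w ≠ 0) (h : ∀ᶠ t in 𝓝 (0 : ℝ), p + t • w ∈ A) :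
    p ∉ (convexHull ℝ A).extremePoints ℝ := by
  obtain ⟨ε, hε, hball⟩ := Metric.eventually_nhds_iff.1 h
  have hmem (t : ℝ) (ht : |t| < ε) : p + t • w ∈ convexHull ℝ A :=
    subset_convexHull ℝ A (hball (by simpa using ht))
  intro hp
  have hseg : p ∈ openSegment ℝ (p + (ε / 2) • w) (p + (-(ε / 2)) • w) :=
    ⟨1 / 2, 1 / 2, by norm_num, by norm_num, by norm_num, by module⟩
  have := (hp.2 (hmem _ (by rw [abs_of_pos (by positivity)]; linarith))
    (hmem _ (by rw [abs_neg, abs_of_pos (by positivity)]; linarith)) hseg)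
  simp [hε.ne', hw] at this

def separableBilinearSet {ι : Type*} [Fintype ι] (a : ι → ℝ) (d : ℝ) :
    Set ((ι → ℝ) × (ι → ℝ)) :=
  {p | (∀ i, p.1 i ∈ Icc (0 : ℝ) 1) ∧ (∀ i, p.2 i ∈ Icc (0 : ℝ) 1) ∧
    d ≤ ∑ i, a i * (p.1 i * p.2 i)}

namespace SeparableBilinearSet

variable {ι : Type*} [Fintype ι]

theorem eventually_forall_add_smul_mem_Icc {x u : ι → ℝ} (hx : ∀ i, x i ∈ Icc (0 : ℝ) 1)
    (hu : support u ⊆ {i | x i ∈ Ioo 0 1}) :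
    ∀ᶠ t in 𝓝 (0 : ℝ), ∀ i, (x + t • u) i ∈ Icc (0 : ℝ) 1 := by
  refine eventually_all.2 fun i => ?_
  by_cases hui : u i = 0
  · simp [hui, hx i]
  have hlim : Tendsto (fun t : ℝ => x i + t * u i) (𝓝 0) (𝓝 (x i)) :=
    (by fun_prop : Continuous fun t : ℝ => x i + t * u i).tendsto' 0 (x i) (by simp)
  exact (hlim.eventually (Ioo_mem_nhds (hu hui).1 (hu hui).2)).mono
    fun t ht => by simpa using Ioo_subset_Icc_self ht

theorem sum_mul_add_smul_mul_add_smul (a x y u v : ι → ℝ) (t : ℝ) :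
    ∑ i, a i * ((x + t • u) i * (y + t • v) i) = ∑ i, a i * (x i * y i) +
      t * ∑ i, a i * (u i * y i + x i * v i) + t ^ 2 * ∑ i, a i * (u i * v i) := by
  simp only [Finset.mul_sum, ← Finset.sum_add_distrib]
  exact Finset.sum_congr rfl fun i _ => by
    simp only [Pi.add_apply, Pi.smul_apply, smul_eq_mul]; ring

theorem eventually_le_sum_mul_add_smul_mul_add_smul {a x y u v : ι → ℝ} {d : ℝ}
    (h : d < ∑ i, a i * (x i * y i) ∨ (d ≤ ∑ i, a i * (x i * y i) ∧
      ∑ i, a i * (u i * y i + x i * v i) = 0 ∧ 0 ≤ ∑ i, a i * (u i * v i))) :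
    ∀ᶠ t in 𝓝 (0 : ℝ), d ≤ ∑ i, a i * ((x + t • u) i * (y + t • v) i) := by
  rcases h with hlt | ⟨hle, hlin, hquad⟩
  · have hcont : Continuous fun t : ℝ => ∑ i, a i * ((x + t • u) i * (y + t • v) i) := by
      fun_prop
    exact (hcont.tendsto 0).eventually (lt_mem_nhds (by simpa using hlt)) |>.mono
      fun t ht => ht.le
  · refine Eventually.of_forall fun t => ?_
    rw [sum_mul_add_smul_mul_add_smul, hlin]
    nlinarith [sq_nonneg t]

variable {a : ι → ℝ} {d : ℝ} {x y : ι → ℝ}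

theorem notMem_extremePoints_of_feasibleDirection {u v : ι → ℝ}
    (hmem : (x, y) ∈ separableBilinearSet a d) (huv : u ≠ 0 ∨ v ≠ 0)
    (hu : support u ⊆ {i | x i ∈ Ioo 0 1}) (hv : support v ⊆ {i | y i ∈ Ioo 0 1})
    (h : d < ∑ i, a i * (x i * y i) ∨
      (∑ i, a i * (u i * y i + x i * v i) = 0 ∧ 0 ≤ ∑ i, a i * (u i * v i))) :
    (x, y) ∉ (convexHull ℝ (separableBilinearSet a d)).extremePoints ℝ := by
  refine notMem_extremePoints_convexHull_of_eventually
    (fun h => huv.elim (· (Prod.mk_eq_zero.1 h).1) (· (Prod.mk_eq_zero.1 h).2)) ?_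
  filter_upwards [eventually_forall_add_smul_mem_Icc hmem.1 hu,
    eventually_forall_add_smul_mem_Icc hmem.2.1 hv,
    eventually_le_sum_mul_add_smul_mul_add_smul (h.imp_right (⟨hmem.2.2, ·⟩))] with t hx hy hd
  exact ⟨hx, hy, hd⟩

theorem swap_mem_extremePoints
    (h : (x, y) ∈ (convexHull ℝ (separableBilinearSet a d)).extremePoints ℝ) :
    (y, x) ∈ (convexHull ℝ (separableBilinearSet a d)).extremePoints ℝ := by
  let σ := LinearEquiv.prodComm ℝ (ι → ℝ) (ι → ℝ)
  have hσ : σ '' separableBilinearSet a d = separableBilinearSet a d := by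
    ext ⟨x', y'⟩
    simp [σ, separableBilinearSet, mul_comm, and_left_comm]
  have hconv : σ '' convexHull ℝ (separableBilinearSet a d) =
      convexHull ℝ (separableBilinearSet a d) :=
    (σ.toLinearMap.image_convexHull _).trans (congrArg _ hσ)
  have := mem_image_of_mem σ h
  rwa [image_extremePoints, hconv] at this

theorem isCompact_separableBilinearSet (a : ι → ℝ) (d : ℝ) :
    IsCompact (separableBilinearSet a d) := by
  refine ((isCompact_univ_pi fun _ => isCompact_Icc).prod
    (isCompact_univ_pi fun _ => isCompact_Icc)).of_isClosed_subset ?_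
    fun p hp => ⟨fun i _ => hp.1 i, fun i _ => hp.2.1 i⟩
  simp only [separableBilinearSet, ofPred_and, ofPred_forall]
  exact (isClosed_iInter fun i => isClosed_Icc.preimage (by fun_prop)).inter
    ((isClosed_iInter fun i => isClosed_Icc.preimage (by fun_prop)).inter
      (isClosed_le continuous_const (by fun_prop)))

/-- `{a i}` is a minimal cover of `d - ∑ j ∈ J, a j`; for a singleton, minimality only asks
`0 < d - ∑ j ∈ J, a j`. -/
def HasSingletonMinimalCover (a : ι → ℝ) (d : ℝ) : Prop :=
  ∃ i, 0 < a i ∧ ∃ J : Finset ι, i ∉ J ∧ d - a i < ∑ j ∈ J, a j ∧ ∑ j ∈ J, a j < d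

def vertexCoordinates (a : ι → ℝ) (d : ℝ) : Set ℝ :=
  {0, 1} ∪ range fun p : ι × Finset ι => (d - ∑ j ∈ p.2, a j) / a p.1

theorem finite_vertexCoordinates (a : ι → ℝ) (d : ℝ) : (vertexCoordinates a d).Finite :=
  (toFinite _).union (finite_range _)

theorem exists_sum_mul_mul_eq_add_sum (a x y : ι → ℝ) {i : ι}
    (hx : ∀ j ≠ i, x j = 0 ∨ x j = 1) (hy : ∀ j ≠ i, y j = 0 ∨ y j = 1) :
    ∃ J : Finset ι, i ∉ J ∧ ∑ j, a j * (x j * y j) = a i * (x i * y i) + ∑ j ∈ J, a j := by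
  classical
  refine ⟨Finset.univ.filter fun j => j ≠ i ∧ x j * y j = 1, by simp, ?_⟩
  calc ∑ j, a j * (x j * y j)
      = ∑ j, ((if j = i then a j * (x j * y j) else 0) +
          if j ≠ i ∧ x j * y j = 1 then a j else 0) := Finset.sum_congr rfl fun j _ => by
        rcases eq_or_ne j i with rfl | hji
        · simp
        · rcases hx j hji with h | h <;> rcases hy j hji with h' | h' <;> simp [hji, h, h']
    _ = _ := by rw [Finset.sum_add_distrib, Finset.sum_ite_eq', Finset.sum_filter]; simp


theorem sum_mul_mul_eq_of_mem_extremePoints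
    (hext : (x, y) ∈ (convexHull ℝ (separableBilinearSet a d)).extremePoints ℝ) {i : ι}
    (hxi : x i ∈ Ioo 0 1) : ∑ k, a k * (x k * y k) = d := by
  classical
  have hmem := extremePoints_convexHull_subset hext
  by_contra h
  exact notMem_extremePoints_of_feasibleDirection (u := Pi.single i 1) (v := 0) hmem
    (Or.inl (Pi.single_ne_zero_iff.2 one_ne_zero))
    (Pi.support_single_subset.trans (singleton_subset_iff.2 hxi)) (by simp)
    (Or.inl (hmem.2.2.lt_of_ne (Ne.symm h))) hext

theorem mul_ne_zero_of_mem_extremePoints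
    (hext : (x, y) ∈ (convexHull ℝ (separableBilinearSet a d)).extremePoints ℝ) {i : ι}
    (hxi : x i ∈ Ioo 0 1) : a i * y i ≠ 0 := by
  classical
  intro h
  exact notMem_extremePoints_of_feasibleDirection (u := Pi.single i 1) (v := 0)
    (extremePoints_convexHull_subset hext)
    (Or.inl (Pi.single_ne_zero_iff.2 one_ne_zero))
    (Pi.support_single_subset.trans (singleton_subset_iff.2 hxi)) (by simp)
    (Or.inr ⟨by simp [Pi.single_apply, h], by simp⟩) hext

theorem fst_eq_zero_or_eq_one_of_mem_extremePoints
    (hext : (x, y) ∈ (convexHull ℝ (separableBilinearSet a d)).extremePoints ℝ) {i j : ι}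
    (hxi : x i ∈ Ioo 0 1) (hji : j ≠ i) : x j = 0 ∨ x j = 1 := by
  classical
  have hmem := extremePoints_convexHull_subset hext
  have hci := mul_ne_zero_of_mem_extremePoints hext hxi
  by_contra! hxj
  have hxj' : x j ∈ Ioo 0 1 := ⟨(hmem.1 j).1.lt_of_ne' hxj.1, (hmem.1 j).2.lt_of_ne hxj.2⟩
  refine notMem_extremePoints_of_feasibleDirection (u := Pi.single i (a j * y j) -
    Pi.single j (a i * y i)) (v := 0) hmem (Or.inl fun h => ?_) ?_ (by simp)
    (Or.inr ⟨?_, by simp⟩) hext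
  · simpa [hji, hci] using congrFun h j
  · exact (support_sub _ _).trans (union_subset
      (Pi.support_single_subset.trans (singleton_subset_iff.2 hxi))
      (Pi.support_single_subset.trans (singleton_subset_iff.2 hxj')))
  · simp only [Pi.sub_apply, Pi.single_apply, sub_mul, ite_mul, zero_mul, Pi.zero_apply,
      mul_zero, add_zero, mul_sub, mul_ite, Finset.sum_sub_distrib, Finset.sum_ite_eq',
      Finset.mem_univ, ↓reduceIte]
    ring

theorem snd_eq_zero_or_eq_one_of_mem_extremePoints
    (hext : (x, y) ∈ (convexHull ℝ (separableBilinearSet a d)).extremePoints ℝ) {i j : ι}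
    (hxi : x i ∈ Ioo 0 1) (hji : j ≠ i) : y j = 0 ∨ y j = 1 := by
  classical
  have hmem := extremePoints_convexHull_subset hext
  have hci := mul_ne_zero_of_mem_extremePoints hext hxi
  by_contra! hyj
  have hyj' : y j ∈ Ioo 0 1 := ⟨(hmem.2.1 j).1.lt_of_ne' hyj.1, (hmem.2.1 j).2.lt_of_ne hyj.2⟩
  refine notMem_extremePoints_of_feasibleDirection (u := Pi.single i (a j * x j))
    (v := Pi.single j (-(a i * y i))) hmem (Or.inr (Pi.single_ne_zero_iff.2 (neg_ne_zero.2 hci)))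
    (Pi.support_single_subset.trans (singleton_subset_iff.2 hxi))
    (Pi.support_single_subset.trans (singleton_subset_iff.2 hyj'))
    (Or.inr ⟨?_, by simp [Pi.single_apply, hji]⟩) hext
  simp only [Pi.single_apply, ite_mul, zero_mul, mul_ite, mul_neg, mul_zero, mul_add,
    Finset.sum_add_distrib, Finset.sum_ite_eq', Finset.mem_univ, ↓reduceIte]
  ring

theorem nonneg_of_mem_extremePoints
    (hext : (x, y) ∈ (convexHull ℝ (separableBilinearSet a d)).extremePoints ℝ) {i : ι}
    (hxi : x i ∈ Ioo 0 1) (hyi : y i ∈ Ioo 0 1) : 0 ≤ a i := by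
  classical
  by_contra! hai
  -- Scaling `x i` up and `y i` down by the same factor `1 ± t` multiplies `x i * y i` by `1 - t²`.
  refine notMem_extremePoints_of_feasibleDirection (u := Pi.single i (x i))
    (v := Pi.single i (-y i)) (extremePoints_convexHull_subset hext)
    (Or.inl (Pi.single_ne_zero_iff.2 hxi.1.ne'))
    (Pi.support_single_subset.trans (singleton_subset_iff.2 hxi))
    (Pi.support_single_subset.trans (singleton_subset_iff.2 hyi))
    (Or.inr ⟨by simp [Pi.single_apply, mul_add, mul_ite, ite_mul, Finset.sum_add_distrib], ?_⟩)
    hext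
  simp only [Pi.single_apply, mul_ite, mul_neg, ite_mul, zero_mul, mul_zero, Finset.sum_ite_eq',
    Finset.mem_univ, ↓reduceIte, Left.nonneg_neg_iff]
  nlinarith [mul_pos hxi.1 hyi.1]

theorem fst_mem_vertexCoordinates_of_mem_extremePoints (hnC : ¬HasSingletonMinimalCover a d)
    (hext : (x, y) ∈ (convexHull ℝ (separableBilinearSet a d)).extremePoints ℝ) (i : ι) :
    x i ∈ vertexCoordinates a d := by
  have hmem := extremePoints_convexHull_subset hext
  by_contra hxC
  have hxi : x i ∈ Ioo 0 1 :=
    ⟨(hmem.1 i).1.lt_of_ne fun h => hxC (Or.inl (Or.inl h.symm)),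
      (hmem.1 i).2.lt_of_ne fun h => hxC (Or.inl (Or.inr h))⟩
  have hci := mul_ne_zero_of_mem_extremePoints hext hxi
  obtain ⟨J, hiJ, hsum⟩ := exists_sum_mul_mul_eq_add_sum a x y
    (fun _ => fst_eq_zero_or_eq_one_of_mem_extremePoints hext hxi)
    (fun _ => snd_eq_zero_or_eq_one_of_mem_extremePoints hext hxi)
  rw [sum_mul_mul_eq_of_mem_extremePoints hext hxi] at hsum
  have hy01 : ∀ k, y k ∈ Icc (0 : ℝ) 1 := hmem.2.1
  rcases (hy01 i).2.eq_or_lt with hyi | hyi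
  · refine hxC (Or.inr ⟨(i, J), ?_⟩)
    field_simp [left_ne_zero_of_mul hci]
    rw [hyi] at hsum
    linarith
  have hyi0 : 0 < y i := (hy01 i).1.lt_of_ne' (right_ne_zero_of_mul hci)
  have hai : 0 < a i := (nonneg_of_mem_extremePoints hext hxi ⟨hyi0, hyi⟩).lt_of_ne'
    (left_ne_zero_of_mul hci)
  have hxy : 0 < x i * y i := mul_pos hxi.1 hyi0
  have hxy1 : x i * y i < 1 := by nlinarith [hxi.2]
  exact hnC ⟨i, hai, J, hiJ, by nlinarith, by nlinarith⟩

theorem extremePoints_subset_vertexCoordinates (hnC : ¬HasSingletonMinimalCover a d) :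
    (convexHull ℝ (separableBilinearSet a d)).extremePoints ℝ ⊆ separableBilinearSet a d ∩
      {p | ∀ i, p.1 i ∈ vertexCoordinates a d ∧ p.2 i ∈ vertexCoordinates a d} :=
  fun _ hp => ⟨extremePoints_convexHull_subset hp, fun i =>
    ⟨fst_mem_vertexCoordinates_of_mem_extremePoints hnC hp i,
      fst_mem_vertexCoordinates_of_mem_extremePoints hnC (swap_mem_extremePoints hp) i⟩⟩

theorem exists_finset_convexHull_eq (hnC : ¬HasSingletonMinimalCover a d) :
    ∃ F : Finset ((ι → ℝ) × (ι → ℝ)),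
      convexHull ℝ (separableBilinearSet a d) = convexHull ℝ (F : Set ((ι → ℝ) × (ι → ℝ))) := by
  have hC : (univ.pi fun _ : ι => vertexCoordinates a d).Finite :=
    Set.Finite.pi fun _ => finite_vertexCoordinates a d
  have hF : (separableBilinearSet a d ∩
      {p | ∀ i, p.1 i ∈ vertexCoordinates a d ∧ p.2 i ∈ vertexCoordinates a d}).Finite :=
    (hC.prod hC).subset fun p hp => ⟨fun i _ => (hp.2 i).1, fun i _ => (hp.2 i).2⟩
  refine ⟨hF.toFinset, ?_⟩
  rw [hF.coe_toFinset]
  exact convexHull_eq_of_extremePoints_subset (isCompact_separableBilinearSet a d) hF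
    inter_subset_left (extremePoints_subset_vertexCoordinates hnC)

def IsMinimalCoverPartition [DecidableEq ι] (a : ι → ℝ) (d : ℝ) (I J₀ J₁ : Finset ι) : Prop :=
  I.Nonempty ∧ Disjoint I J₀ ∧ Disjoint I J₁ ∧ Disjoint J₀ J₁ ∧ I ∪ J₀ ∪ J₁ = Finset.univ ∧
    (∀ i ∈ I, 0 < a i) ∧ 0 < d - ∑ i ∈ J₁, a i ∧ d - ∑ i ∈ J₁, a i < ∑ i ∈ I, a i ∧
    ∀ K : Finset ι, K ⊂ I → ∑ i ∈ K, a i ≤ d - ∑ i ∈ J₁, a i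

theorem HasSingletonMinimalCover.exists_isMinimalCoverPartition [DecidableEq ι]
    (h : HasSingletonMinimalCover a d) : ∃ I J₀ J₁, IsMinimalCoverPartition a d I J₀ J₁ := by
  obtain ⟨i, hai, J, hiJ, hlow, hhigh⟩ := h
  refine ⟨{i}, (insert i J)ᶜ, J, Finset.singleton_nonempty i, by simp, by simpa using hiJ,
    disjoint_compl_left.mono_right (Finset.subset_insert i J), ?_, by simpa using hai,
    by linarith, by rw [Finset.sum_singleton]; linarith, fun K hK => ?_⟩
  · ext j
    simp only [Finset.mem_union, Finset.mem_compl, Finset.mem_insert, Finset.mem_singleton,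
      Finset.mem_univ, iff_true]
    tauto
  · rw [Finset.eq_empty_of_ssubset_singleton hK, Finset.sum_empty]
    linarith

end SeparableBilinearSet

theorem stmt_2 (n : ℕ) (a : Fin n → ℝ) (d : ℝ)
    (S : Set ((Fin n → ℝ) × (Fin n → ℝ)))
    (hS : S = {p : (Fin n → ℝ) × (Fin n → ℝ) |
      (∀ i, p.1 i ∈ Set.Icc (0 : ℝ) 1) ∧ (∀ i, p.2 i ∈ Set.Icc (0 : ℝ) 1) ∧
      d ≤ ∑ i, a i * (p.1 i * p.2 i)}) :
    (∃ I J0 J1 : Finset (Fin n),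
      -- (I, J₀, J₁) is a partition of [n] with I ≠ ∅
      I.Nonempty ∧ Disjoint I J0 ∧ Disjoint I J1 ∧ Disjoint J0 J1 ∧
      I ∪ J0 ∪ J1 = Finset.univ ∧
      -- {a_i : i ∈ I} forms a minimal cover of d − ∑_{i ∈ J₁} a_i
      (∀ i ∈ I, 0 < a i) ∧ 0 < d - ∑ i ∈ J1, a i ∧
      d - ∑ i ∈ J1, a i < ∑ i ∈ I, a i ∧
      (∀ K : Finset (Fin n), K ⊂ I → ∑ i ∈ K, a i ≤ d - ∑ i ∈ J1, a i)) ∨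
    (∃ F : Finset ((Fin n → ℝ) × (Fin n → ℝ)),
      convexHull ℝ S = convexHull ℝ (F : Set ((Fin n → ℝ) × (Fin n → ℝ)))) := by
  subst hS
  by_cases hC : SeparableBilinearSet.HasSingletonMinimalCover a d
  · obtain ⟨I, J₀, J₁, h⟩ := hC.exists_isMinimalCoverPartition
    exact Or.inl ⟨I, J₀, J₁, h⟩
  · exact Or.inr (SeparableBilinearSet.exists_finset_convexHull_eq hC)
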